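/- Let A and B be finite abelian groups and let Γ = A * B be their free product. Then the kernel of the canonical surjection Γ → A × B equals the subgroup generated by the commutators a b a⁻¹ b⁻¹ with a ∈ A, b ∈ B, and this kernel is a free group of rank (|A| − 1)(|B| − 1). -/

import Mathlib

/-!
The subgroup `N = ⁅range inl, range inr⁆` is normalized by both factors, hence normal, and the
factors commute modulo `N`; so `A ∗ B ⧸ N` is a quotient of `A × B`, which forces `N = ker toProd`.

For freeness, let `F` be the free group on the pairs `(a, b)` with `a ≠ 1 ≠ b`, and `c a b` the
generator `(a, b)` (or `1` if `a = 1` or `b = 1`). Let `A ∗ B` act on `F × A × B`: `B` translates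
the last coordinate, and `A` translates the middle one and multiplies the `F`-coordinate on the left
by the change of `c`. Along the path traced by the commutator `⁅a, b⁆` from `(w, 1, 1)` this change
telescopes to `c a b`, so a word `u` in the commutators moves `(1, 1, 1)` to `(u, 1, 1)`; hence
the map `F → A ∗ B` sending `(a, b)` to `⁅a, b⁆` is injective, and its image is `N`.
-/

open Monoid

namespace Monoid.Coprod

open scoped commutatorElement

variable {A B : Type*} [Group A] [Group B]

instance normal_commutator_range_inl_range_inr :
    ⁅(inl : A →* A ∗ B).range, (inr : B →* A ∗ B).range⁆.Normal := by
  rw [← Subgroup.normalizer_eq_top_iff, eq_top_iff, ← range_inl_sup_range_inr]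
  exact sup_le (Subgroup.normalizer_commutator_ge_left _ _)
    (Subgroup.normalizer_commutator_ge_right _ _)

theorem ker_toProd :
    (toProd : A ∗ B →* A × B).ker = ⁅(inl : A →* A ∗ B).range, (inr : B →* A ∗ B).range⁆ := by
  set N := ⁅(inl : A →* A ∗ B).range, (inr : B →* A ∗ B).range⁆
  refine le_antisymm ?_ ?_
  · let q := QuotientGroup.mk' N
    have hcomm : ∀ a b, Commute (q (inl a)) (q (inr b)) := fun a b => by
      rw [← commutatorElement_eq_one_iff_commute, ← map_commutatorElement, ← MonoidHom.mem_ker,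
        QuotientGroup.ker_mk']
      exact Subgroup.commutator_mem_commutator ⟨a, rfl⟩ ⟨b, rfl⟩
    let h : A × B →* (A ∗ B) ⧸ N := (q.comp inl).noncommCoprod (q.comp inr) hcomm
    have hq : h.comp toProd = q := hom_ext (by ext; simp [h]) (by ext; simp [h])
    calc (toProd : A ∗ B →* A × B).ker ≤ h.ker.comap toProd := MonoidHom.ker_le_comap _ _
      _ = q.ker := by rw [MonoidHom.comap_ker, hq]
      _ = N := QuotientGroup.ker_mk' N
  · rw [Subgroup.commutator_le]
    rintro _ ⟨a, rfl⟩ _ ⟨b, rfl⟩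
    simp [MonoidHom.mem_ker, commutatorElement_def]

theorem commutator_range_inl_range_inr_eq_closure :
    ⁅(inl : A →* A ∗ B).range, (inr : B →* A ∗ B).range⁆ =
      Subgroup.closure {x | ∃ (a : A) (b : B), x = inl a * inr b * (inl a)⁻¹ * (inr b)⁻¹} := by
  rw [Subgroup.commutator_def]
  congr
  ext x
  simp [commutatorElement_def, eq_comm]

section TwistedAction

variable {G : Type*} [Group G]

def shear (c : A → B → G) : Equiv.Perm (G × A × B) where
  toFun p := (c p.2.1 p.2.2 * p.1, p.2)
  invFun p := ((c p.2.1 p.2.2)⁻¹ * p.1, p.2)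
  left_inv p := by simp
  right_inv p := by simp

/- Labels move by right multiplication by the inverse: then `⁅a, b⁆` picks up `c a b`, where left
multiplication would give `c a⁻¹ b⁻¹`. -/
variable (G) in
def shiftLabelLeft : A →* Equiv.Perm (G × A × B) where
  toFun a' := (Equiv.refl G).prodCongr ((Equiv.mulRight a'⁻¹).prodCongr (Equiv.refl B))
  map_one' := by ext <;> simp
  map_mul' a₁ a₂ := by ext <;> simp [mul_assoc]

variable (G) in
def shiftLabelRight : B →* Equiv.Perm (G × A × B) where
  toFun b' := (Equiv.refl G).prodCongr ((Equiv.refl A).prodCongr (Equiv.mulRight b'⁻¹))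
  map_one' := by ext <;> simp
  map_mul' b₁ b₂ := by ext <;> simp [mul_assoc]

def twistedPerm (c : A → B → G) : A ∗ B →* Equiv.Perm (G × A × B) :=
  lift ((MulAut.conj (shear c)).toMonoidHom.comp (shiftLabelLeft G)) (shiftLabelRight G)

@[simp]
theorem twistedPerm_inl_apply (c : A → B → G) (a' : A) (p : G × A × B) :
    twistedPerm c (inl a') p =
      (c (p.2.1 * a'⁻¹) p.2.2 * (c p.2.1 p.2.2)⁻¹ * p.1, p.2.1 * a'⁻¹, p.2.2) := by
  obtain ⟨w, a, b⟩ := p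
  simp [twistedPerm, shear, shiftLabelLeft, mul_assoc]

@[simp]
theorem twistedPerm_inr_apply (c : A → B → G) (b' : B) (p : G × A × B) :
    twistedPerm c (inr b') p = (p.1, p.2.1, p.2.2 * b'⁻¹) := rfl

theorem twistedPerm_commutator_apply {c : A → B → G} (hc_left : ∀ b, c 1 b = 1)
    (hc_right : ∀ a, c a 1 = 1) (a : A) (b : B) (w : G) :
    twistedPerm c ⁅(inl a : A ∗ B), inr b⁆ (w, 1, 1) = (c a b * w, 1, 1) := by
  rw [commutatorElement_def, ← map_inv, ← map_inv]
  simp only [map_mul, Equiv.Perm.mul_apply, twistedPerm_inl_apply, twistedPerm_inr_apply]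
  simp [hc_left, hc_right]

end TwistedAction

abbrev NontrivialPairs (A B : Type*) [One A] [One B] := {a : A // a ≠ 1} × {b : B // b ≠ 1}

theorem card_nontrivialPairs [Finite A] [Finite B] :
    Nat.card (NontrivialPairs A B) = (Nat.card A - 1) * (Nat.card B - 1) := by
  classical
  have := Fintype.ofFinite A
  have := Fintype.ofFinite B
  simp [Nat.card_eq_fintype_card]

def commutatorFreeHom : FreeGroup (NontrivialPairs A B) →* A ∗ B :=
  FreeGroup.lift fun s => ⁅(inl s.1.1 : A ∗ B), inr s.2.1⁆

theorem range_commutatorFreeHom :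
    (commutatorFreeHom : FreeGroup (NontrivialPairs A B) →* A ∗ B).range =
      ⁅(inl : A →* A ∗ B).range, (inr : B →* A ∗ B).range⁆ := by
  rw [commutatorFreeHom, FreeGroup.range_lift_eq_closure, Subgroup.commutator_def]
  refine le_antisymm (Subgroup.closure_mono ?_) (Subgroup.closure_le _ |>.2 ?_)
  · rintro _ ⟨s, rfl⟩
    exact ⟨_, ⟨_, rfl⟩, _, ⟨_, rfl⟩, rfl⟩
  · rintro _ ⟨_, ⟨a, rfl⟩, _, ⟨b, rfl⟩, rfl⟩
    by_cases ha : a = 1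
    · simp [ha]
    by_cases hb : b = 1
    · simp [hb]
    exact Subgroup.subset_closure ⟨(⟨a, ha⟩, ⟨b, hb⟩), rfl⟩

open Classical in
noncomputable def pairGenerator (a : A) (b : B) : FreeGroup (NontrivialPairs A B) :=
  if h : a ≠ 1 ∧ b ≠ 1 then .of (⟨a, h.1⟩, ⟨b, h.2⟩) else 1

theorem pairGenerator_one_left (b : B) : pairGenerator (1 : A) b = 1 := dif_neg (by simp)

theorem pairGenerator_one_right (a : A) : pairGenerator a (1 : B) = 1 := dif_neg (by simp)

theorem twistedPerm_commutatorFreeHom_apply (u w : FreeGroup (NontrivialPairs A B)) :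
    twistedPerm pairGenerator (commutatorFreeHom u) (w, 1, 1) = (u * w, 1, 1) := by
  induction u using FreeGroup.induction_on generalizing w with
  | C1 => simp
  | of s =>
    rw [commutatorFreeHom, FreeGroup.lift_apply_of,
      twistedPerm_commutator_apply pairGenerator_one_left pairGenerator_one_right]
    simp [pairGenerator, s.1.2, s.2.2]
  | inv_of s ih => rw [map_inv, map_inv, Equiv.Perm.inv_eq_iff_eq, ih, mul_inv_cancel_left]
  | mul x y hx hy => rw [map_mul, map_mul, Equiv.Perm.mul_apply, hy, hx, mul_assoc]

theorem commutatorFreeHom_injective :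
    Function.Injective (commutatorFreeHom : FreeGroup (NontrivialPairs A B) →* A ∗ B) := by
  refine (injective_iff_map_eq_one _).2 fun u hu => ?_
  simpa [hu] using (congrArg Prod.fst (twistedPerm_commutatorFreeHom_apply u 1)).symm

end Monoid.Coprod

theorem stmt_1 (A B : Type*) [CommGroup A] [CommGroup B] [Finite A] [Finite B]
    (π : Coprod A B →* A × B)
    (hπ : π = Coprod.lift (MonoidHom.inl A B) (MonoidHom.inr A B)) :
    π.ker = Subgroup.closure
        {x : Coprod A B | ∃ (a : A) (b : B),
          x = Coprod.inl a * Coprod.inr b * (Coprod.inl a)⁻¹ * (Coprod.inr b)⁻¹} ∧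
      Nonempty (π.ker ≃* FreeGroup (Fin ((Nat.card A - 1) * (Nat.card B - 1)))) := by
  have hker :
      π.ker = ⁅(Coprod.inl : A →* Coprod A B).range, (Coprod.inr : B →* Coprod A B).range⁆ :=
    hπ ▸ Coprod.ker_toProd
  refine ⟨hker.trans Coprod.commutator_range_inl_range_inr_eq_closure, ⟨?_⟩⟩
  exact (MulEquiv.subgroupCongr (Coprod.range_commutatorFreeHom.trans hker.symm)).symm.trans <|
    (MonoidHom.ofInjective Coprod.commutatorFreeHom_injective).symm.trans <|
      FreeGroup.freeGroupCongr (Finite.equivFinOfCardEq Coprod.card_nontrivialPairs)
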